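/- arXiv:1704.05673 — 2 statements merged into one kernel-verified Lean document; each statement's English description precedes it below -/
import Mathlib

section
/- Let F_q be a finite field and V = F_q^n with n ≥ 3. Suppose τ^{δ₁} ∘ θ_{X₁} ∘ χ_{f₁} = τ^{δ₂} ∘ θ_{X₂} ∘ χ_{f₂} as maps on the vertex set of In(V), where δ₁, δ₂ ∈ {0, 1}, X₁, X₂ are invertible n×n matrices over F_q, and f₁, f₂ are field automorphisms of F_q; here τ sends each vertex W to its orthogonal complement W^⊥ with respect to the standard bilinear form B(α,β) = ∑ᵢ αᵢβᵢ, θ_X sends each vertex W to {Xw : w ∈ W}, and χ_f sends each vertex W to its image under componentwise application of f. Then δ₁ = δ₂, f₁ = f₂, and X₂ = cX₁ for some nonzero scalar c ∈ F_q. -/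
/-- The vertex type of the subspace inclusion graph: nontrivial proper subspaces. -/
abbrev InVert (F V : Type*) [Field F] [AddCommGroup V] [Module F V] :=
  {W : Submodule F V // W ≠ ⊥ ∧ W ≠ ⊤}

/-- The subspace inclusion graph `In(V)`: vertices are the nontrivial proper subspaces
of `V`, two of them being adjacent iff one is properly contained in the other. -/
def inclGraph (F V : Type*) [Field F] [AddCommGroup V] [Module F V] :
    SimpleGraph (InVert F V) where
  Adj W₁ W₂ := W₁.1 < W₂.1 ∨ W₂.1 < W₁.1
  symm := ⟨fun _ _ h => h.symm⟩
  loopless := ⟨fun _ h => h.elim (lt_irrefl _) (lt_irrefl _)⟩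

/-- Orthogonal complement with respect to the standard bilinear form
`B(α,β) = ∑ i, α i * β i` on `Fin n → F`. -/
def orthComp {F : Type*} [Field F] {n : ℕ} (W : Submodule F (Fin n → F)) :
    Submodule F (Fin n → F) where
  carrier := {v | ∀ w ∈ W, ∑ i, v i * w i = 0}
  zero_mem' := by intro w _; simp
  add_mem' := by
    intro a b ha hb w hw
    simp [add_mul, Finset.sum_add_distrib, ha w hw, hb w hw]
  smul_mem' := by
    intro c a ha w hw
    simp [smul_eq_mul, mul_assoc, ← Finset.mul_sum, ha w hw]

/-- Componentwise application of a field automorphism `f` to a subspace of `Fin n → F`. -/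
def fieldMap {F : Type*} [Field F] {n : ℕ} (f : F ≃+* F) (W : Submodule F (Fin n → F)) :
    Submodule F (Fin n → F) where
  carrier := (fun v i => f (v i)) '' (W : Set (Fin n → F))
  zero_mem' := ⟨0, W.zero_mem, by ext i; simp⟩
  add_mem' := by
    rintro _ _ ⟨a, ha, rfl⟩ ⟨b, hb, rfl⟩
    exact ⟨a + b, W.add_mem ha hb, by ext i; simp⟩
  smul_mem' := by
    rintro c _ ⟨a, ha, rfl⟩
    exact ⟨f.symm c • a, W.smul_mem _ ha, by ext i; simp [map_mul]⟩

/-! Evaluate both composites on lines. A line is never a hyperplane when `n ≥ 3`, so the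
exponents of `τ` agree, and as `τ` is an involution the two semilinear maps
`v ↦ Xₖ *ᵥ fₖ(v)` send every line to the same line. Comparing these images on the lines through
`eᵢ` and through `eᵢ + a • eⱼ` with the linearly independent columns of `X₁` yields one scalar
`c` with `X₂ eᵢ = c • X₁ eᵢ` for all `i` and `c * f₁ a = f₂ a * c` for all `a`. -/

open Module Matrix Submodule

lemma finrank_span_singleton_le_one {K V : Type*} [DivisionRing K] [AddCommGroup V]
    [Module K V] (v : V) : finrank K (K ∙ v) ≤ 1 := by
  simpa using finrank_span_le_card ({v} : Set V)

lemma span_singleton_ne_top {K V : Type*} [DivisionRing K] [AddCommGroup V] [Module K V]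
    (hV : 1 < finrank K V) (v : V) : K ∙ v ≠ ⊤ := by
  intro h
  have hv := finrank_span_singleton_le_one (K := K) v
  rw [h, finrank_top] at hv
  omega

lemma LinearIndependent.eq_of_smul_add_smul_eq {R M : Type*} [Ring R] [AddCommGroup M]
    [Module R M] {x y : M} (h : LinearIndependent R ![x, y]) {c₁ c₂ d s t : R}
    (hd : d • (x + s • y) = c₁ • x + t • c₂ • y) : d = c₁ ∧ d * s = t * c₂ := by
  rw [smul_add, smul_smul, smul_smul] at hd
  exact h.eq_of_pair hd

section DotProduct

variable {F ι : Type*} [Field F] [Fintype ι]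

lemma dotProductBilin_nondegenerate [DecidableEq ι] :
    (dotProductBilin F F : LinearMap.BilinForm F (ι → F)).Nondegenerate := by
  constructor <;>
  · intro v hv
    ext i
    simpa using hv (Pi.single i 1)

lemma dotProductBilin_isRefl :
    LinearMap.BilinForm.IsRefl (dotProductBilin F F : LinearMap.BilinForm F (ι → F)) := by
  intro v w h
  simpa [dotProduct_comm] using h

end DotProduct

section OrthComp

variable {F : Type*} [Field F] {n : ℕ}

lemma orthComp_eq_orthogonal (W : Submodule F (Fin n → F)) :
    orthComp W = LinearMap.BilinForm.orthogonal (dotProductBilin F F) W := by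
  ext v
  rw [LinearMap.BilinForm.mem_orthogonal_iff]
  exact forall₂_congr fun w _ => by rw [dotProductBilin_apply_apply, dotProduct_comm]; rfl

lemma orthComp_involutive : Function.Involutive (orthComp : Submodule F (Fin n → F) → _) := by
  intro W
  rw [orthComp_eq_orthogonal, orthComp_eq_orthogonal,
    LinearMap.BilinForm.orthogonal_orthogonal dotProductBilin_nondegenerate dotProductBilin_isRefl]

lemma finrank_orthComp (W : Submodule F (Fin n → F)) :
    finrank F (orthComp W) = n - finrank F W := by
  rw [orthComp_eq_orthogonal, LinearMap.BilinForm.finrank_orthogonal dotProductBilin_nondegenerate,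
    finrank_fin_fun]

lemma span_singleton_ne_orthComp_span_singleton (hn : 2 < n) (u w : Fin n → F) :
    F ∙ u ≠ orthComp (F ∙ w) := by
  intro h
  have hu := finrank_span_singleton_le_one (K := F) u
  have hw := finrank_span_singleton_le_one (K := F) w
  rw [h, finrank_orthComp] at hu
  omega

lemma eq_and_span_eq_of_iterate_orthComp_eq (hn : 2 < n) {δ₁ δ₂ : ℕ} (hδ₁ : δ₁ ≤ 1)
    (hδ₂ : δ₂ ≤ 1) {u w : Fin n → F}
    (h : orthComp^[δ₁] (F ∙ u) = orthComp^[δ₂] (F ∙ w)) : δ₁ = δ₂ ∧ F ∙ u = F ∙ w := by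
  interval_cases δ₁ <;> interval_cases δ₂
  · exact ⟨rfl, h⟩
  · exact absurd h (span_singleton_ne_orthComp_span_singleton hn u w)
  · exact absurd h.symm (span_singleton_ne_orthComp_span_singleton hn w u)
  · exact ⟨rfl, orthComp_involutive.injective h⟩

end OrthComp

section FieldMap

variable {F : Type*} [Field F] {n : ℕ}

lemma fieldMap_span_singleton (f : F ≃+* F) (v : Fin n → F) :
    fieldMap f (F ∙ v) = F ∙ (f ∘ v) := by
  ext x
  rw [mem_span_singleton]
  constructor
  · rintro ⟨w, hw, rfl⟩
    obtain ⟨a, rfl⟩ := mem_span_singleton.mp hw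
    exact ⟨f a, by ext i; simp⟩
  · rintro ⟨a, rfl⟩
    exact ⟨f.symm a • v, smul_mem _ _ (mem_span_singleton_self v), by ext i; simp⟩

lemma map_mulVecLin_fieldMap_span_singleton (X : Matrix (Fin n) (Fin n) F) (f : F ≃+* F)
    (v : Fin n → F) :
    (fieldMap f (F ∙ v)).map X.mulVecLin = F ∙ (X *ᵥ (f ∘ v)) := by
  rw [fieldMap_span_singleton, map_span, Set.image_singleton, mulVecLin_apply]

end FieldMap

section Single

variable {F ι : Type*} [Field F] [DecidableEq ι]

lemma comp_single_one (f : F ≃+* F) (i : ι) : f ∘ Pi.single i 1 = Pi.single i 1 := by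
  ext k
  simp [Pi.single_apply, apply_ite f]

lemma comp_single_add_smul_single (f : F ≃+* F) (i j : ι) (a : F) :
    f ∘ (Pi.single i 1 + a • Pi.single j 1) = Pi.single i 1 + f a • Pi.single j 1 := by
  ext k
  simp [Pi.single_apply, apply_ite f]

lemma single_add_smul_single_ne_zero {i j : ι} (hij : i ≠ j) (a : F) :
    Pi.single i 1 + a • Pi.single j 1 ≠ 0 := by
  intro h
  simpa [Pi.single_apply, hij] using congrFun h i

end Single

namespace Matrix

variable {F ι : Type*} [Field F] [Fintype ι] [DecidableEq ι]

lemma linearIndependent_col_pair_of_isUnit {X : Matrix ι ι F} (hX : IsUnit X) {i j : ι}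
    (hij : i ≠ j) : LinearIndependent F ![X.col i, X.col j] := by
  have hcomp : ![X.col i, X.col j] = X.col ∘ ![i, j] := by
    funext k
    fin_cases k <;> rfl
  rw [hcomp]
  refine (linearIndependent_cols_of_isUnit hX).comp _ ?_
  intro a b
  fin_cases a <;> fin_cases b <;> simp [hij, hij.symm]

theorem eq_smul_of_span_mulVec_comp_eq [Nontrivial ι] {f₁ f₂ : F ≃+* F} {X₁ X₂ : Matrix ι ι F}
    (hX₁ : IsUnit X₁) (h : ∀ v : ι → F, v ≠ 0 → F ∙ (X₁ *ᵥ (f₁ ∘ v)) = F ∙ (X₂ *ᵥ (f₂ ∘ v))) :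
    f₁ = f₂ ∧ ∃ c : F, c ≠ 0 ∧ X₂ = c • X₁ := by
  have hcol : ∀ i, ∃ c : Fˣ, c • X₁.col i = X₂.col i := by
    intro i
    have hi := h (Pi.single i 1) (by simp)
    rwa [comp_single_one, comp_single_one, mulVec_single_one, mulVec_single_one,
      span_singleton_eq_span_singleton] at hi
  choose c hc using hcol
  have hpair : ∀ i j, i ≠ j → ∀ a, (c i : F) * f₁ a = f₂ a * c j := by
    intro i j hij a
    obtain ⟨d, hd⟩ :=
      span_singleton_eq_span_singleton.mp (h _ (single_add_smul_single_ne_zero hij a))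
    simp only [comp_single_add_smul_single, mulVec_add, mulVec_smul, mulVec_single_one,
      ← hc i, ← hc j, Units.smul_def] at hd
    obtain ⟨hdi, hdj⟩ := (linearIndependent_col_pair_of_isUnit hX₁ hij).eq_of_smul_add_smul_eq hd
    rw [← hdi, hdj]
  obtain ⟨i₀, j₀, hij₀⟩ := exists_pair_ne ι
  have hconst : ∀ i, c i = c i₀ := by
    intro i
    rcases eq_or_ne i i₀ with rfl | hi
    · rfl
    · ext
      simpa using (hpair i₀ i hi.symm 1).symm
  refine ⟨RingEquiv.ext fun a => ?_, c i₀, (c i₀).ne_zero, ?_⟩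
  · have hj₀ := hpair i₀ j₀ hij₀ a
    rw [hconst j₀, mul_comm] at hj₀
    exact mul_right_cancel₀ (c i₀).ne_zero hj₀
  · ext k i
    have hi := congrFun (hc i) k
    rw [hconst i] at hi
    simpa [Units.smul_def] using hi.symm

end Matrix

theorem inclGraph_aut_decomposition_unique_general
    (F : Type*) [Field F] (n : ℕ) (hn : 3 ≤ n)
    (δ₁ δ₂ : ℕ) (hδ₁ : δ₁ ≤ 1) (hδ₂ : δ₂ ≤ 1)
    (X₁ X₂ : Matrix (Fin n) (Fin n) F) (hX₁ : IsUnit X₁)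
    (f₁ f₂ : F ≃+* F)
    (h : ∀ W : Submodule F (Fin n → F), W ≠ ⊥ → W ≠ ⊤ →
      orthComp^[δ₁] (Submodule.map X₁.mulVecLin (fieldMap f₁ W)) =
        orthComp^[δ₂] (Submodule.map X₂.mulVecLin (fieldMap f₂ W))) :
    δ₁ = δ₂ ∧ f₁ = f₂ ∧ ∃ c : F, c ≠ 0 ∧ X₂ = c • X₁ := by
  have hlines : ∀ v : Fin n → F, v ≠ 0 →
      δ₁ = δ₂ ∧ F ∙ (X₁ *ᵥ (f₁ ∘ v)) = F ∙ (X₂ *ᵥ (f₂ ∘ v)) := by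
    intro v hv
    have hW : F ∙ v ≠ ⊤ := span_singleton_ne_top (by rw [finrank_fin_fun]; omega) v
    refine eq_and_span_eq_of_iterate_orthComp_eq hn hδ₁ hδ₂ ?_
    simpa only [map_mulVecLin_fieldMap_span_singleton] using
      h _ (mt span_singleton_eq_bot.mp hv) hW
  have : Nontrivial (Fin n) := Fin.nontrivial_iff_two_le.mpr (by omega)
  have he : (Pi.single ⟨0, by omega⟩ 1 : Fin n → F) ≠ 0 := by simp
  exact ⟨(hlines _ he).1, eq_smul_of_span_mulVec_comp_eq hX₁ fun v hv => (hlines v hv).2⟩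

/-- Uniqueness of the decomposition `τ^δ ∘ θ_X ∘ χ_f`: if two such composites agree on
every vertex of `In(F_q^n)`, `n ≥ 3`, then the exponents of `τ` agree, the field
automorphisms agree, and the matrices agree up to a nonzero scalar. -/
theorem inclGraph_aut_decomposition_unique
    (F : Type*) [Field F] [Fintype F] (n : ℕ) (hn : 3 ≤ n)
    (δ₁ δ₂ : ℕ) (hδ₁ : δ₁ ≤ 1) (hδ₂ : δ₂ ≤ 1)
    (X₁ X₂ : Matrix (Fin n) (Fin n) F) (hX₁ : IsUnit X₁) (hX₂ : IsUnit X₂)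
    (f₁ f₂ : F ≃+* F)
    (h : ∀ W : Submodule F (Fin n → F), W ≠ ⊥ → W ≠ ⊤ →
      orthComp^[δ₁] (Submodule.map X₁.mulVecLin (fieldMap f₁ W)) =
        orthComp^[δ₂] (Submodule.map X₂.mulVecLin (fieldMap f₂ W))) :
    δ₁ = δ₂ ∧ f₁ = f₂ ∧ ∃ c : F, c ≠ 0 ∧ X₂ = c • X₁ :=
  inclGraph_aut_decomposition_unique_general F n hn δ₁ δ₂ hδ₁ hδ₂ X₁ X₂ hX₁ f₁ f₂ h
end

section
/- Let F_q be a finite field and let V be an n-dimensional vector space over F_q with n ≥ 3. Let σ be a graph automorphism of In(V). Then for every 1-dimensional subspace L of V, the dimension of σ(L) is either 1 or n − 1. -/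
/-!
A graph automorphism preserves degrees. Writing `N m` for the number of subspaces of `F^m`, a
`k`-dimensional vertex of `In(V)` has degree `N k + N (n - k) - 4`: its neighbours are the proper
nonzero subspaces of it and the proper subspaces of `V` above it. Since `N (m + 1) ≥ 2 N m`
(a hyperplane `H` and a vector `v ∉ H` give the two subspaces `U` and `U ⊔ ⟨v⟩` for each `U ≤ H`),
`N` is strictly convex, so `k ↦ N k + N (n - k)` on `1, …, n - 1` is maximal only at the ends.
-/

open Module Set

theorem add_lt_add_shift_of_strictConvex {f : ℕ → ℕ}
    (hf : ∀ j, f (j + 1) + f (j + 1) < f j + f (j + 2)) {i j t : ℕ} (hij : i < j) (ht : 0 < t) :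
    f (i + t) + f j < f i + f (j + t) := by
  have step : ∀ i j, i < j → f (i + 1) + f j < f i + f (j + 1) := by
    intro i j hij
    induction j, hij using Nat.le_induction with
    | base => exact hf i
    | succ j _ ih => have := hf j; simp only [add_assoc, Nat.reduceAdd] at *; omega
  induction t, ht using Nat.le_induction with
  | base => exact step i j hij
  | succ t _ ih => have := step (i + t) (j + t) (by omega); simp only [add_assoc] at *; omega

theorem ncard_Ioo_add_two {α : Type*} [PartialOrder α] {a b : α} (h : a < b)
    (hfin : (Icc a b).Finite) : (Ioo a b).ncard + 2 = (Icc a b).ncard := by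
  rw [← Ico_insert_right h.le, ← Ioo_insert_left h,
    ncard_insert_of_notMem (by simp [h.ne']) (hfin.subset (by grind)),
    ncard_insert_of_notMem (by simp) (hfin.subset (by grind))]

section Counting

variable {K V : Type*} [DivisionRing K] [AddCommGroup V] [Module K V]

variable (K) in
noncomputable def numSubmodules (m : ℕ) : ℕ := Nat.card (Submodule K (Fin m → K))

theorem card_submodule_eq_numSubmodules [FiniteDimensional K V] :
    Nat.card (Submodule K V) = numSubmodules K (finrank K V) :=
  Nat.card_congr (Submodule.orderIsoMapComap
    (LinearEquiv.ofFinrankEq V (Fin (finrank K V) → K) (by simp))).toEquiv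

theorem ncard_Iic_eq_numSubmodules [FiniteDimensional K V] (W : Submodule K V) :
    (Iic W).ncard = numSubmodules K (finrank K W) := by
  rw [← card_submodule_eq_numSubmodules, ← Nat.card_coe_set_eq]
  exact Nat.card_congr W.mapIic.toEquiv.symm

theorem ncard_Ici_eq_numSubmodules [FiniteDimensional K V] (W : Submodule K V) :
    (Ici W).ncard = numSubmodules K (finrank K V - finrank K W) := by
  rw [← W.finrank_quotient_add_finrank, Nat.add_sub_cancel, ← card_submodule_eq_numSubmodules,
    ← Nat.card_coe_set_eq]
  exact Nat.card_congr W.comapMkQRelIso.toEquiv.symm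

variable [Finite K] [FiniteDimensional K V]

instance Submodule.finite_of_finiteDimensional : Finite (Submodule K V) :=
  have : Finite V := Module.finite_of_finite K
  Finite.of_injective _ SetLike.coe_injective

theorem numSubmodules_pos (m : ℕ) : 0 < numSubmodules K m :=
  Nat.card_pos

theorem two_mul_ncard_Iic_le {B : Submodule K V} {v : V} (hv : v ∉ B) :
    2 * (Iic B).ncard ≤ (Iic (B ⊔ K ∙ v)).ncard := by
  have hdisj : Disjoint (K ∙ v) B := (Submodule.disjoint_span_singleton_of_notMem hv).symm
  have hinter : ∀ U ∈ Iic B, (U ⊔ K ∙ v) ⊓ B = U := fun U hU => by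
    rw [sup_inf_assoc_of_le _ hU, hdisj.eq_bot, sup_bot_eq]
  have hinj : InjOn (· ⊔ K ∙ v) (Iic B) := fun U hU U' hU' h => by
    rw [← hinter U hU, ← hinter U' hU']
    exact congrArg (· ⊓ B) h
  have hmaps : (· ⊔ K ∙ v) '' Iic B ⊆ Iic (B ⊔ K ∙ v) \ Iic B := by
    rintro _ ⟨U, hU, rfl⟩
    exact ⟨sup_le_sup_right (show U ≤ B from hU) _, fun h =>
      hv (h (Submodule.mem_sup_right (Submodule.mem_span_singleton_self v)))⟩
  have hsub : Iic B ⊆ Iic (B ⊔ K ∙ v) := Iic_subset_Iic.2 le_sup_left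
  rw [← ncard_sdiff_add_ncard_of_subset hsub, ← hinj.ncard_image]
  have := ncard_le_ncard hmaps
  omega

variable (K) in
theorem two_mul_numSubmodules_le (m : ℕ) :
    2 * numSubmodules K m ≤ numSubmodules K (m + 1) := by
  let B := LinearMap.range (LinearMap.inl K (Fin m → K) K)
  have hv : ((0, 1) : (Fin m → K) × K) ∉ B := by
    rintro ⟨x, hx⟩
    simpa using congrArg Prod.snd hx
  have hB : finrank K B = m := by
    rw [LinearMap.finrank_range_of_inj LinearMap.inl_injective, finrank_fin_fun]
  have := two_mul_ncard_Iic_le hv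
  rwa [ncard_Iic_eq_numSubmodules, ncard_Iic_eq_numSubmodules,
    Submodule.finrank_sup_span_singleton hv, hB] at this

variable (K) in
theorem numSubmodules_add_lt {n k : ℕ} (hk : 2 ≤ k) (hkn : k + 2 ≤ n) :
    numSubmodules K k + numSubmodules K (n - k) < numSubmodules K 1 + numSubmodules K (n - 1) := by
  have hconvex : ∀ j, numSubmodules K (j + 1) + numSubmodules K (j + 1)
      < numSubmodules K j + numSubmodules K (j + 2) := fun j => by
    have := two_mul_numSubmodules_le K (j + 1)
    have := numSubmodules_pos (K := K) j
    simp only [add_assoc, Nat.reduceAdd] at *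
    omega
  have := add_lt_add_shift_of_strictConvex hconvex (i := 1) (j := n - k) (t := k - 1)
    (by omega) (by omega)
  rwa [show 1 + (k - 1) = k by omega, show n - k + (k - 1) = n - 1 by omega] at this

end Counting

section InclGraph

variable {F V : Type*} [Field F] [AddCommGroup V] [Module F V]

theorem image_val_neighborSet_inclGraph (W : InVert F V) :
    Subtype.val '' (inclGraph F V).neighborSet W = Ioo ⊥ W.1 ∪ Ioo W.1 ⊤ := by
  ext U
  constructor
  · rintro ⟨U, hU, rfl⟩
    rcases hU with h | h
    · exact Or.inr ⟨h, U.2.2.lt_top⟩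
    · exact Or.inl ⟨U.2.1.bot_lt, h⟩
  · rintro (⟨hbot, hlt⟩ | ⟨hlt, htop⟩)
    · exact ⟨⟨U, hbot.ne', hlt.trans_le le_top |>.ne⟩, Or.inr hlt, rfl⟩
    · exact ⟨⟨U, (bot_le.trans_lt hlt).ne', htop.ne⟩, Or.inl hlt, rfl⟩

theorem card_neighborSet_inclGraph_add_four [Finite F] [FiniteDimensional F V] (W : InVert F V) :
    Nat.card ((inclGraph F V).neighborSet W) + 4
      = numSubmodules F (finrank F W.1) + numSubmodules F (finrank F V - finrank F W.1) := by
  have hdisj : Disjoint (Ioo ⊥ W.1) (Ioo W.1 ⊤) :=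
    disjoint_left.2 fun _ h₁ h₂ => lt_asymm h₁.2 h₂.1
  rw [← ncard_Iic_eq_numSubmodules, ← ncard_Ici_eq_numSubmodules, ← Icc_bot, ← Icc_top,
    ← ncard_Ioo_add_two W.2.1.bot_lt (toFinite _), ← ncard_Ioo_add_two W.2.2.lt_top (toFinite _),
    Nat.card_coe_set_eq, ← Subtype.val_injective.injOn.ncard_image,
    image_val_neighborSet_inclGraph, ncard_union_eq hdisj]
  ring

end InclGraph

theorem inclGraph_aut_image_of_line_general
    (F V : Type*) [Field F] [Fintype F] [AddCommGroup V] [Module F V] [FiniteDimensional F V]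
    (σ : inclGraph F V ≃g inclGraph F V) :
    ∀ L : InVert F V, Module.finrank F L.1 = 1 →
      Module.finrank F (σ L).1 = 1 ∨ Module.finrank F (σ L).1 = Module.finrank F V - 1 := by
  intro L hL
  have hdeg : Nat.card ((inclGraph F V).neighborSet L)
      = Nat.card ((inclGraph F V).neighborSet (σ L)) :=
    Nat.card_congr (σ.toEquiv.subtypeEquiv fun _ => σ.map_adj_iff.symm)
  have hL' := card_neighborSet_inclGraph_add_four L
  have hσL := card_neighborSet_inclGraph_add_four (σ L)
  have hpos : finrank F (σ L).1 ≠ 0 := fun h => (σ L).2.1 (Submodule.finrank_eq_zero.1 h)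
  have hlt : finrank F (σ L).1 < finrank F V := Submodule.finrank_lt (σ L).2.2
  by_contra! hne
  have := numSubmodules_add_lt F (k := finrank F (σ L).1) (n := finrank F V) (by omega) (by omega)
  rw [hL] at hL'
  omega

/-- For any graph automorphism `σ` of `In(V)` with `dim V = n ≥ 3`, the image of a
1-dimensional subspace has dimension `1` or `n - 1`. -/
theorem inclGraph_aut_image_of_line
    (F V : Type*) [Field F] [Fintype F] [AddCommGroup V] [Module F V] [FiniteDimensional F V]
    (hn : 3 ≤ Module.finrank F V)
    (σ : inclGraph F V ≃g inclGraph F V) :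
    ∀ L : InVert F V, Module.finrank F L.1 = 1 →
      Module.finrank F (σ L).1 = 1 ∨ Module.finrank F (σ L).1 = Module.finrank F V - 1 :=
  inclGraph_aut_image_of_line_general F V σ
end
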